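/- Let G be a connected graph of order n ≥ 2 and let H be a connected graph with at least two vertices. Let x be a vertex of G, let v be a vertex of H, let B be a strong metric basis of the rooted product graph G∘_v H, let B_x = B ∩ ({x} × V(H)), and let M(v) be the set of vertices of H which are maximally distant from v. Then: (i) |B_x| ≥ dim_s(H) − 1; (ii) if B_x ⊇ {x} × M(v), then |B_x| ≥ dim_s(H); (iii) if v does not belong to any strong metric basis of H, then |B_x| ≥ dim_s(H). -/

import Mathlib

/-!
Inside a fiber `{a} × V(H)` of `G ∘_v H` distances are those of `H`, and a vertex outside the
fiber over `x` reaches `(x, u)` only through the root `(x, v)`. So it strongly resolves two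
vertices of that fiber exactly when `v` strongly resolves them in `H`, and the second
coordinates of `B_x` together with `v` form a strong metric generator of `H`; this gives (i)
and (iii). For (ii), whenever `v` strongly resolves `u` and `w`, so does some vertex maximally
distant from `v`, found by pushing `u` away from `v` along geodesics.
-/

namespace RootedStrong

variable {V : Type*}

/-- `u` is maximally distant from `v`: every neighbor `w` of `u` satisfies `d(v,w) ≤ d(u,v)`. -/
def MaxDistant (G : SimpleGraph V) (u v : V) : Prop :=
  ∀ w, G.Adj u w → G.dist v w ≤ G.dist u v

/-- `u` and `v` are mutually maximally distant. -/
def MMD (G : SimpleGraph V) (u v : V) : Prop :=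
  MaxDistant G u v ∧ MaxDistant G v u

/-- The boundary `∂(G)` of a graph. -/
def boundary (G : SimpleGraph V) : Set V := {u | ∃ v, MMD G u v}

/-- A vertex is simplicial if its neighborhood induces a complete graph. -/
def Simplicial (G : SimpleGraph V) (u : V) : Prop :=
  ∀ x ∈ G.neighborSet u, ∀ y ∈ G.neighborSet u, x ≠ y → G.Adj x y

/-- The set `σ(G)` of simplicial vertices. -/
def simplicialSet (G : SimpleGraph V) : Set V := {u | Simplicial G u}

/-- `w` strongly resolves `u` and `v`. -/
def StronglyResolves (G : SimpleGraph V) (w u v : V) : Prop :=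
  G.dist w u = G.dist w v + G.dist v u ∨ G.dist w v = G.dist w u + G.dist u v

/-- A set of vertices is a strong metric generator if every pair of distinct vertices is
strongly resolved by some of its elements. -/
def IsStrongGenerator (G : SimpleGraph V) (S : Set V) : Prop :=
  ∀ u v : V, u ≠ v → ∃ w ∈ S, StronglyResolves G w u v

/-- The strong metric dimension of a graph. -/
noncomputable def sdim (G : SimpleGraph V) [Fintype V] : ℕ :=
  sInf {n | ∃ S : Finset V, S.card = n ∧ IsStrongGenerator G (S : Set V)}

/-- A strong metric basis: a strong metric generator of minimum cardinality. -/
def IsStrongBasis (G : SimpleGraph V) [Fintype V] (S : Finset V) : Prop :=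
  IsStrongGenerator G (S : Set V) ∧ S.card = sdim G

/-- The rooted product graph `G ∘_v H`. -/
def rootedProd {α β : Type*} (G : SimpleGraph α) (H : SimpleGraph β) (v : β) :
    SimpleGraph (α × β) where
  Adj p q := (p.1 = q.1 ∧ H.Adj p.2 q.2) ∨ (p.2 = v ∧ q.2 = v ∧ G.Adj p.1 q.1)
  symm := by
    constructor
    rintro ⟨a, x⟩ ⟨b, y⟩ (⟨h1, h2⟩ | ⟨h1, h2, h3⟩)
    · exact Or.inl ⟨h1.symm, h2.symm⟩
    · exact Or.inr ⟨h2, h1, h3.symm⟩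
  loopless := by
    constructor
    rintro ⟨a, x⟩ (⟨_, h2⟩ | ⟨_, _, h3⟩)
    · exact H.loopless.irrefl _ h2
    · exact G.loopless.irrefl _ h3

/-- Two distinct vertices are true twins if they have equal closed neighborhoods. -/
def TrueTwins (G : SimpleGraph V) (x y : V) : Prop :=
  x ≠ y ∧ ∀ z, (z = x ∨ G.Adj x z) ↔ (z = y ∨ G.Adj y z)

/-- A twin-free clique: a clique containing no pair of true twins. -/
def IsTwinFreeClique (G : SimpleGraph V) (X : Set V) : Prop :=
  (∀ x ∈ X, ∀ y ∈ X, x ≠ y → G.Adj x y) ∧ ∀ x ∈ X, ∀ y ∈ X, ¬ TrueTwins G x y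

/-- The twin-free clique number `ϖ(G)`. -/
noncomputable def twinFreeCliqueNum (G : SimpleGraph V) : ℕ :=
  sSup {n | ∃ X : Set V, IsTwinFreeClique G X ∧ X.ncard = n}



section RootedProduct

open SimpleGraph

variable {α β : Type*} {G : SimpleGraph α} {H : SimpleGraph β} {v : β}

namespace rootedProd

variable (G H v)

def fiberHom (a : α) : H →g rootedProd G H v where
  toFun b := (a, b)
  map_rel' h := Or.inl ⟨rfl, h⟩

def rootHom : G →g rootedProd G H v where
  toFun a := (a, v)
  map_rel' h := Or.inr ⟨rfl, rfl, h⟩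

end rootedProd

/-- Projecting to the second coordinate contracts root edges to a point and keeps fiber edges. -/
lemma exists_walk_snd_length_le {p q : α × β} (W : (rootedProd G H v).Walk p q) :
    ∃ W' : H.Walk p.2 q.2, W'.length ≤ W.length := by
  induction W with
  | nil => exact ⟨Walk.nil, le_rfl⟩
  | cons h _ ih =>
    obtain ⟨W', hW'⟩ := ih
    rcases h with ⟨_, hH⟩ | ⟨hp, hr, _⟩
    · exact ⟨Walk.cons hH W', Nat.succ_le_succ hW'⟩
    · refine ⟨W'.copy (hr.trans hp.symm) rfl, ?_⟩
      rw [Walk.length_copy]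
      exact hW'.trans (Nat.le_succ _)

lemma dist_snd_le_length {p q : α × β} (W : (rootedProd G H v).Walk p q) :
    H.dist p.2 q.2 ≤ W.length := by
  obtain ⟨W', hW'⟩ := exists_walk_snd_length_le W
  exact (dist_le W').trans hW'

lemma connected_rootedProd (hG : G.Connected) (hH : H.Connected) :
    (rootedProd G H v).Connected := by
  rw [connected_iff]
  refine ⟨fun p q => ?_, ⟨(hG.nonempty.some, hH.nonempty.some)⟩⟩
  exact ((hH.preconnected p.2 v).map (rootedProd.fiberHom G H v p.1)).trans <|
    ((hG.preconnected p.1 q.1).map (rootedProd.rootHom G H v)).trans <|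
    (hH.preconnected v q.2).map (rootedProd.fiberHom G H v q.1)

lemma rootedProd_dist_mk_mk (hH : H.Connected) (a : α) (u w : β) :
    (rootedProd G H v).dist (a, u) (a, w) = H.dist u w := by
  apply le_antisymm
  · obtain ⟨W, hW⟩ := hH.exists_walk_length_eq_dist u w
    have := dist_le (W.map (rootedProd.fiberHom G H v a))
    rwa [Walk.length_map, hW] at this
  · obtain ⟨W, hW⟩ :=
      ((hH.preconnected u w).map (rootedProd.fiberHom G H v a)).exists_walk_length_eq_dist
    have := dist_snd_le_length W
    rwa [hW] at this

/-- The only edges between different fibers join roots, so a walk entering another fiber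
passes through its root. -/
lemma root_mem_support_of_fst_ne {p q : α × β} (W : (rootedProd G H v).Walk p q)
    (hpq : p.1 ≠ q.1) : (q.1, v) ∈ W.support := by
  induction W with
  | nil => exact absurd rfl hpq
  | @cons p r q h W ih =>
    rw [Walk.support_cons, List.mem_cons]
    by_cases hr : r.1 = q.1
    · rcases h with ⟨hpr, _⟩ | ⟨_, hrv, _⟩
      · exact absurd (hpr.trans hr) hpq
      · exact Or.inr (hr ▸ hrv ▸ W.start_mem_support)
    · exact Or.inr (ih hr)

lemma rootedProd_dist_of_fst_ne (hG : G.Connected) (hH : H.Connected) {a x : α} (hax : a ≠ x)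
    (b u : β) :
    (rootedProd G H v).dist (a, b) (x, u) =
      (rootedProd G H v).dist (a, b) (x, v) + H.dist v u := by
  classical
  have hR := connected_rootedProd (v := v) hG hH
  apply le_antisymm
  · rw [← rootedProd_dist_mk_mk hH x v u]
    exact hR.dist_triangle
  · obtain ⟨W, hW⟩ := hR.exists_walk_length_eq_dist (a, b) (x, u)
    have hroot := root_mem_support_of_fst_ne W hax
    rw [← hW, ← W.take_spec hroot, Walk.length_append]
    exact add_le_add (dist_le _) (dist_snd_le_length (W.dropUntil _ hroot))

lemma stronglyResolves_rootedProd_mk_iff (hH : H.Connected) (x : α) (b u w : β) :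
    StronglyResolves (rootedProd G H v) (x, b) (x, u) (x, w) ↔ StronglyResolves H b u w := by
  simp only [StronglyResolves, rootedProd_dist_mk_mk hH]

lemma StronglyResolves.root_of_rootedProd (hG : G.Connected) (hH : H.Connected)
    {a x : α} (hax : a ≠ x) {b u w : β}
    (h : StronglyResolves (rootedProd G H v) (a, b) (x, u) (x, w)) :
    StronglyResolves H v u w := by
  unfold StronglyResolves at h ⊢
  rw [rootedProd_dist_of_fst_ne hG hH hax b u, rootedProd_dist_of_fst_ne hG hH hax b w] at h
  simp only [rootedProd_dist_mk_mk hH] at h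
  omega

lemma IsStrongGenerator.insert_root_preimage_mk (hG : G.Connected) (hH : H.Connected)
    {S : Set (α × β)} (hS : IsStrongGenerator (rootedProd G H v) S) (x : α) :
    IsStrongGenerator H (insert v (Prod.mk x ⁻¹' S)) := by
  intro u w huw
  obtain ⟨⟨a, b⟩, hab, hres⟩ := hS (x, u) (x, w) (by simpa using huw)
  by_cases hax : a = x
  · subst hax
    exact ⟨b, Or.inr hab, (stronglyResolves_rootedProd_mk_iff hH a b u w).1 hres⟩
  · exact ⟨v, Set.mem_insert v _, hres.root_of_rootedProd hG hH hax⟩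

/-- A vertex `u'` farthest from `v` among those with `u` on a `v`–`u'` geodesic is maximally
distant from `v`, and `u` lies on a `u'`–`w` geodesic. -/
lemma exists_maxDistant_stronglyResolves [Finite β] (hH : H.Connected) {u w : β}
    (h : H.dist v u = H.dist v w + H.dist w u) :
    ∃ u', MaxDistant H u' v ∧ H.dist u' w = H.dist u' u + H.dist u w := by
  set S : Set β := {z | H.dist v z = H.dist v u + H.dist u z}
  obtain ⟨u', hu'S, hmax⟩ :=
    S.toFinite.exists_maximalFor (fun z => H.dist v z) S ⟨u, by simp [S]⟩
  have hu' : H.dist v u' = H.dist v u + H.dist u u' := hu'S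
  refine ⟨u', fun z hz => ?_, ?_⟩
  · by_contra! hc
    have t1 : H.dist u z ≤ H.dist u u' + H.dist u' z := hH.dist_triangle
    have t2 : H.dist v z ≤ H.dist v u + H.dist u z := hH.dist_triangle
    have hz1 : H.dist u' z = 1 := dist_eq_one_iff_adj.mpr hz
    rw [SimpleGraph.dist_comm] at hc
    have hzS : z ∈ S := by show H.dist v z = _; omega
    have : H.dist v z ≤ H.dist v u' := hmax hzS hc.le
    omega
  · have t1 : H.dist v u' ≤ H.dist v w + H.dist w u' := hH.dist_triangle
    have t2 : H.dist w u' ≤ H.dist w u + H.dist u u' := hH.dist_triangle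
    rw [SimpleGraph.dist_comm (u := u') (v := w), SimpleGraph.dist_comm (u := u') (v := u),
      SimpleGraph.dist_comm (u := u) (v := w)]
    omega

lemma IsStrongGenerator.of_insert_of_maxDistant_subset [Finite β] (hH : H.Connected)
    {T : Set β} (hT : IsStrongGenerator H (insert v T)) (hM : {u | MaxDistant H u v} ⊆ T) :
    IsStrongGenerator H T := by
  intro u w huw
  obtain ⟨z, hz, hres⟩ := hT u w huw
  rcases hz with rfl | hzT
  · rcases hres with h | h
    · obtain ⟨u', hu', hres'⟩ := exists_maxDistant_stronglyResolves hH h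
      exact ⟨u', hM hu', Or.inr hres'⟩
    · obtain ⟨w', hw', hres'⟩ := exists_maxDistant_stronglyResolves hH h
      exact ⟨w', hM hw', Or.inl hres'⟩
  · exact ⟨z, hzT, hres⟩

lemma sdim_le_ncard [Fintype β] {T : Set β} (hT : IsStrongGenerator H T) :
    sdim H ≤ T.ncard :=
  Nat.sInf_le ⟨T.toFinite.toFinset, (Set.ncard_eq_toFinset_card T).symm, by simpa using hT⟩

lemma sdim_le_ncard_of_insert [Fintype β] {T : Set β} (hT : IsStrongGenerator H (insert v T))
    (hv : ∀ S : Finset β, IsStrongBasis H S → v ∉ S) : sdim H ≤ T.ncard := by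
  by_contra! hlt
  have hle := sdim_le_ncard hT
  have hvT : v ∉ T := fun hvT => by rw [Set.insert_eq_of_mem hvT] at hle; omega
  rw [Set.ncard_insert_of_notMem hvT] at hle
  refine hv (insert v T).toFinite.toFinset ⟨by simpa using hT, ?_⟩ (by simp)
  rw [← Set.ncard_eq_toFinset_card, Set.ncard_insert_of_notMem hvT]
  omega

end RootedProduct

theorem statement15_general {α β : Type*} [Fintype α] [Fintype β]
    (G : SimpleGraph α) (H : SimpleGraph β)
    (hG : G.Connected) (hH : H.Connected)
    (x : α) (v : β) (B : Finset (α × β)) (hB : IsStrongBasis (rootedProd G H v) B)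
    (Bx : Set (α × β)) (hBx : Bx = (B : Set (α × β)) ∩ {p : α × β | p.1 = x}) :
    sdim H - 1 ≤ Bx.ncard ∧
    (({x} : Set α) ×ˢ {u : β | MaxDistant H u v} ⊆ Bx → sdim H ≤ Bx.ncard) ∧
    ((∀ S : Finset β, IsStrongBasis H S → v ∉ S) → sdim H ≤ Bx.ncard) := by
  set T := Prod.mk x ⁻¹' (B : Set (α × β))
  have hBxT : Bx = Prod.mk x '' T := by
    rw [hBx, Set.image_preimage_eq_inter_range]
    congr 1
    ext ⟨a, b⟩
    simp [eq_comm]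
  have hcard : Bx.ncard = T.ncard := by
    rw [hBxT, Set.ncard_image_of_injective _ (Prod.mk_right_injective x)]
  have hgen : IsStrongGenerator H (insert v T) := hB.1.insert_root_preimage_mk hG hH x
  rw [hcard]
  refine ⟨?_, fun hM => ?_, sdim_le_ncard_of_insert hgen⟩
  · have := sdim_le_ncard hgen
    have := Set.ncard_insert_le v T
    omega
  · refine sdim_le_ncard (hgen.of_insert_of_maxDistant_subset hH fun u hu => ?_)
    exact (hBx ▸ hM ⟨Set.mem_singleton x, hu⟩).1

theorem statement15 {α β : Type*} [Fintype α] [Fintype β]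
    (G : SimpleGraph α) (H : SimpleGraph β)
    (hG : G.Connected) (hH : H.Connected)
    (h2 : 2 ≤ Fintype.card α) (h2b : 2 ≤ Fintype.card β)
    (x : α) (v : β) (B : Finset (α × β)) (hB : IsStrongBasis (rootedProd G H v) B)
    (Bx : Set (α × β)) (hBx : Bx = (B : Set (α × β)) ∩ {p : α × β | p.1 = x}) :
    sdim H - 1 ≤ Bx.ncard ∧
    (({x} : Set α) ×ˢ {u : β | MaxDistant H u v} ⊆ Bx → sdim H ≤ Bx.ncard) ∧
    ((∀ S : Finset β, IsStrongBasis H S → v ∉ S) → sdim H ≤ Bx.ncard) :=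
  statement15_general G H hG hH x v B hB Bx hBx

end RootedStrong
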